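/- Let G₁ be a finite simple graph with minimum degree δ₁ and maximum degree Δ₁, let n ≥ 3 be a natural number, and assume G₁ has order n₁ > n with exactly n vertices of degree Δ₁, and that the alliance polynomial A(G₁;x) is symmetric (an even or odd function of x). Then: (1) if δ₁ = 1, then A(G₁;x) is not a monic polynomial of degree 2n − n₁ + Δ₁; (2) if δ₁ = 2, then either 2n₁ < 2Δ₁ + n or A(G₁;x) is not a monic polynomial of degree 2n − n₁ + Δ₁. -/

import Mathlib

open Polynomial Finset

/-- Number of neighbors of `v` inside the set `S` (denoted δ_S(v)). -/
def SimpleGraph.degIn {V : Type*} [Fintype V] [DecidableEq V]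
    (G : SimpleGraph V) [DecidableRel G.Adj] (S : Finset V) (v : V) : ℕ :=
  (S.filter (fun u => G.Adj v u)).card

/-- Number of neighbors of `v` outside the set `S` (denoted δ_{S̄}(v)). -/
def SimpleGraph.degOut {V : Type*} [Fintype V] [DecidableEq V]
    (G : SimpleGraph V) [DecidableRel G.Adj] (S : Finset V) (v : V) : ℕ :=
  (Sᶜ.filter (fun u => G.Adj v u)).card

/-- `S` is an exact defensive `k`-alliance in `G`: the induced subgraph `⟨S⟩` is connected
(in particular `S` is nonempty) and `k = k_S = min_{v ∈ S} (δ_S(v) - δ_{S̄}(v))`. -/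
def SimpleGraph.IsExactAlliance {V : Type*} [Fintype V] [DecidableEq V]
    (G : SimpleGraph V) [DecidableRel G.Adj] (S : Finset V) (k : ℤ) : Prop :=
  (G.induce (S : Set V)).Connected ∧
    (∀ v ∈ S, k ≤ (G.degIn S v : ℤ) - (G.degOut S v : ℤ)) ∧
    (∃ v ∈ S, (G.degIn S v : ℤ) - (G.degOut S v : ℤ) = k)

/-- `A_k(G)`: the number of exact defensive `k`-alliances in `G`. -/
noncomputable def SimpleGraph.allianceCoeff {V : Type*} [Fintype V] [DecidableEq V]
    (G : SimpleGraph V) [DecidableRel G.Adj] (k : ℤ) : ℕ :=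
  Set.ncard {S : Finset V | G.IsExactAlliance S k}

/-- The alliance polynomial `A(G;x) = Σ_{k=-Δ}^{Δ} A_k(G) x^{n+k}`, where `n` is the order and
`Δ` the maximum degree of `G`, regarded as a real polynomial. -/
noncomputable def SimpleGraph.alliancePoly {V : Type*} [Fintype V] [DecidableEq V]
    (G : SimpleGraph V) [DecidableRel G.Adj] : Polynomial ℝ :=
  ∑ k ∈ Finset.Icc (-(G.maxDegree : ℤ)) (G.maxDegree : ℤ),
    (G.allianceCoeff k : ℝ) • X ^ (((Fintype.card V : ℤ) + k).toNat)

/-!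
Let `B` be the set of the `n` vertices of maximum degree `Δ` and `m = n₁ - n ≥ 1`. If `A(G₁;x)` were
monic of degree `n₁ + K` with `K = Δ - 2m`, then `A_K = 1` and `A_j = 0` for `K < j ≤ Δ` (the
degree cannot be `n₁ - Δ` or less, since two singletons `{v}`, `v ∈ B`, give `A_{-Δ} ≥ 2`). Then
every connected set whose vertices all have `δ_S - δ_{S̄} ≥ K` is an exact `K`-alliance, so there is
at most one such set. Connected components of `⟨B⟩`, and of `⟨B \ X⟩` when each vertex of `B \ X`
still has at most `m` neighbours outside, are such sets, and they differ. A suitable `X` of one or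
two vertices exists because only vertices of `B` adjacent to all of `V \ B` are critical, and they
are neighbours of a vertex of minimum degree `δ₁ ≤ 2` outside `B`.
-/

namespace SimpleGraph

variable {V : Type*} [Fintype V] [DecidableEq V] (G : SimpleGraph V) [DecidableRel G.Adj]

/-- The coefficient pattern of `A(G;x)` being monic of degree `|V| + K`. -/
def IsMonicAllianceDegree (K : ℤ) : Prop :=
  G.allianceCoeff K = 1 ∧ ∀ j : ℤ, K < j → j ≤ G.maxDegree → G.allianceCoeff j = 0

section Degrees

variable {S U X : Finset V} {v : V}

lemma degIn_add_degOut (S : Finset V) (v : V) : G.degIn S v + G.degOut S v = G.degree v := by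
  rw [degIn, degOut, degree, neighborFinset_eq_filter, ← card_union_of_disjoint
    (disjoint_filter_filter disjoint_compl_right), ← filter_union, union_compl]

lemma degIn_sub_degOut_eq (S : Finset V) (v : V) :
    (G.degIn S v : ℤ) - G.degOut S v = G.degree v - 2 * G.degOut S v := by
  have := G.degIn_add_degOut S v
  omega

lemma degOut_le_card_compl : G.degOut S v ≤ #Sᶜ := card_filter_le _ _

lemma degOut_lt_card_compl (h : ¬ ∀ y ∉ S, G.Adj v y) : G.degOut S v < #Sᶜ := by
  obtain ⟨y, hyS, hvy⟩ := not_forall₂.1 h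
  exact card_lt_card (filter_ssubset.2 ⟨y, mem_compl.2 hyS, hvy⟩)

lemma degIn_add_card_compl (h : ∀ y ∉ S, G.Adj v y) : G.degIn S v + #Sᶜ = G.degree v := by
  rw [← G.degIn_add_degOut S v, degOut, filter_true_of_mem fun y hy => h y (mem_compl.1 hy)]

lemma degOut_sdiff (hXU : X ⊆ U) (v : V) :
    G.degOut (U \ X) v = G.degOut U v + #(X.filter (G.Adj v)) := by
  rw [degOut, degOut, sdiff_eq, compl_inf, compl_compl, sup_eq_union, filter_union,
    card_union_of_disjoint (disjoint_filter_filter (disjoint_compl_left_iff.2 hXU))]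

lemma degOut_le_degOut (hclosed : ∀ y ∈ U, G.Adj v y → y ∈ S) :
    G.degOut S v ≤ G.degOut U v := by
  refine card_le_card fun y hy => ?_
  simp only [mem_filter, mem_compl] at hy ⊢
  exact ⟨fun hyU => hy.1 (hclosed y hyU hy.2), hy.2⟩

lemma card_lt_degIn_add_degIn {a b w : V} (hcover : ∀ x ∈ S, G.Adj a x ∨ G.Adj b x)
    (hw : w ∈ S) (hwa : G.Adj a w) (hwb : G.Adj b w) : #S < G.degIn S a + G.degIn S b := by
  set Na := S.filter (fun u => G.Adj a u)
  set Nb := S.filter (fun u => G.Adj b u)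
  have hunion : #S ≤ #(Na ∪ Nb) := by
    rw [← filter_or]
    exact (congrArg card (filter_true_of_mem hcover)).ge
  have hinter : 0 < #(Na ∩ Nb) :=
    card_pos.2 ⟨w, mem_inter.2 ⟨mem_filter.2 ⟨hw, hwa⟩, mem_filter.2 ⟨hw, hwb⟩⟩⟩
  have := card_union_add_card_inter Na Nb
  change #S < #Na + #Nb
  omega

end Degrees

section Alliances

variable {G} {S : Finset V} {k K : ℤ}

lemma isExactAlliance_singleton (v : V) : G.IsExactAlliance {v} (-(G.degree v : ℤ)) := by
  have hIn : G.degIn {v} v = 0 := by simp [degIn, filter_singleton]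
  have hdiff : (G.degIn {v} v : ℤ) - G.degOut {v} v = -(G.degree v : ℤ) := by
    have := G.degIn_add_degOut {v} v
    omega
  refine ⟨?_, fun u hu => ?_, ⟨v, mem_singleton_self v, hdiff⟩⟩
  · rw [coe_singleton]
    exact (connected_iff _).2 ⟨.of_subsingleton, ⟨⟨v, rfl⟩⟩⟩
  · rw [mem_singleton.1 hu, hdiff]

lemma exists_isExactAlliance (hS : (G.induce (S : Set V)).Connected) :
    ∃ k, G.IsExactAlliance S k := by
  have hne : S.Nonempty := by
    obtain ⟨⟨v, hv⟩⟩ := hS.nonempty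
    exact ⟨v, hv⟩
  obtain ⟨v, hv, hmin⟩ := exists_mem_eq_inf' hne fun v => (G.degIn S v : ℤ) - G.degOut S v
  exact ⟨_, hS, fun w hw => inf'_le _ hw, ⟨v, hv, hmin.symm⟩⟩

lemma IsExactAlliance.le_maxDegree (h : G.IsExactAlliance S k) : k ≤ G.maxDegree := by
  obtain ⟨v, -, rfl⟩ := h.2.2
  have := G.degIn_add_degOut S v
  have := G.degree_le_maxDegree v
  omega

lemma IsExactAlliance.le_of_forall_le (h : G.IsExactAlliance S k)
    (hK : ∀ v ∈ S, K ≤ (G.degIn S v : ℤ) - G.degOut S v) : K ≤ k := by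
  obtain ⟨v, hv, rfl⟩ := h.2.2
  exact hK v hv

lemma IsExactAlliance.allianceCoeff_ne_zero (h : G.IsExactAlliance S k) :
    G.allianceCoeff k ≠ 0 :=
  ((Set.ncard_pos (Set.toFinite _)).2 ⟨S, h⟩).ne'

lemma two_le_allianceCoeff {v w : V} (hvw : v ≠ w) {d : ℕ} (hv : G.degree v = d)
    (hw : G.degree w = d) : 2 ≤ G.allianceCoeff (-(d : ℤ)) := by
  refine (Set.one_lt_ncard (Set.toFinite _)).2 ⟨{v}, ?_, {w}, ?_, ?_⟩
  · exact hv ▸ isExactAlliance_singleton v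
  · exact hw ▸ isExactAlliance_singleton w
  · exact fun h => hvw (singleton_injective h)

lemma IsMonicAllianceDegree.isExactAlliance (hK : G.IsMonicAllianceDegree K)
    (hS : (G.induce (S : Set V)).Connected)
    (hSK : ∀ v ∈ S, K ≤ (G.degIn S v : ℤ) - G.degOut S v) : G.IsExactAlliance S K := by
  obtain ⟨k, hk⟩ := exists_isExactAlliance hS
  obtain rfl | hlt := (hk.le_of_forall_le hSK).eq_or_lt
  · exact hk
  · exact absurd (hK.2 k hlt hk.le_maxDegree) hk.allianceCoeff_ne_zero

lemma IsMonicAllianceDegree.eq_of_forall_le {T : Finset V} (hK : G.IsMonicAllianceDegree K)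
    (hS : (G.induce (S : Set V)).Connected)
    (hSK : ∀ v ∈ S, K ≤ (G.degIn S v : ℤ) - G.degOut S v)
    (hT : (G.induce (T : Set V)).Connected)
    (hTK : ∀ v ∈ T, K ≤ (G.degIn T v : ℤ) - G.degOut T v) : S = T := by
  obtain ⟨A, hA⟩ := Set.ncard_eq_one.1 hK.1
  have hSA : S ∈ ({A} : Set (Finset V)) := hA ▸ hK.isExactAlliance hS hSK
  have hTA : T ∈ ({A} : Set (Finset V)) := hA ▸ hK.isExactAlliance hT hTK
  exact hSA.trans hTA.symm

end Alliances

lemma exists_connected_subset_forall_adj_mem {U : Finset V} {u : V} (hu : u ∈ U) :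
    ∃ S ⊆ U, u ∈ S ∧ (G.induce (S : Set V)).Connected ∧
      ∀ w ∈ S, ∀ y ∈ U, G.Adj w y → y ∈ S := by
  obtain ⟨S, hS, ⟨hSU, huS, hconn⟩, hmax⟩ :=
    Finite.exists_le_maximal (p := fun S : Finset V => S ⊆ U ∧ u ∈ S ∧
      (G.induce (S : Set V)).Connected) (a := {u})
      ⟨singleton_subset_iff.2 hu, mem_singleton_self u, (isExactAlliance_singleton u).1⟩
  refine ⟨S, hSU, huS, hconn, fun w hw y hy hwy => ?_⟩
  have hinsert : ((insert y S : Finset V) : Set V) = ↑S ∪ {w, y} := by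
    rw [coe_insert, Set.union_insert, Set.insert_eq_of_mem (Set.mem_union_left _ hw),
      Set.union_singleton]
  have hconn' : (G.induce ((insert y S : Finset V) : Set V)).Connected := by
    rw [hinsert]
    exact induce_union_connected hconn.preconnected
      (induce_pair_connected_of_adj hwy).preconnected ⟨w, hw, Set.mem_insert w {y}⟩
  exact hmax ⟨insert_subset hy hSU, mem_insert_of_mem huS, hconn'⟩ (subset_insert y S)
    (mem_insert_self y S)

lemma exists_connected_subset_forall_le {U : Finset V} {u : V} (hu : u ∈ U) {K : ℤ}
    (hU : ∀ w ∈ U, K + 2 * G.degOut U w ≤ G.degree w) :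
    ∃ S ⊆ U, u ∈ S ∧ (G.induce (S : Set V)).Connected ∧
      ∀ w ∈ S, K ≤ (G.degIn S w : ℤ) - G.degOut S w := by
  obtain ⟨S, hSU, huS, hconn, hclosed⟩ := G.exists_connected_subset_forall_adj_mem hu
  refine ⟨S, hSU, huS, hconn, fun w hw => ?_⟩
  have := G.degOut_le_degOut (hclosed w hw)
  have := hU w (hSU hw)
  rw [degIn_sub_degOut_eq]
  omega

lemma coeff_alliancePoly (hΔ : G.maxDegree < Fintype.card V) {j : ℤ}
    (hj : j ∈ Icc (-(G.maxDegree : ℤ)) G.maxDegree) :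
    G.alliancePoly.coeff ((Fintype.card V + j).toNat) = G.allianceCoeff j := by
  rw [alliancePoly, finsetSum_coeff, sum_eq_single_of_mem j hj]
  · simp
  · intro k hk hkj
    rw [mem_Icc] at hk hj
    have : (Fintype.card V + j).toNat ≠ (Fintype.card V + k).toNat := by omega
    simp [coeff_X_pow, this]

lemma isMonicAllianceDegree_of_monic (hΔ : G.maxDegree < Fintype.card V)
    (htwo : 2 ≤ G.allianceCoeff (-(G.maxDegree : ℤ))) {K : ℤ} (hKΔ : K ≤ G.maxDegree)
    (hmon : G.alliancePoly.Monic)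
    (hdeg : (G.alliancePoly.natDegree : ℤ) = Fintype.card V + K) :
    G.IsMonicAllianceDegree K := by
  have hzero : ∀ j ∈ Icc (-(G.maxDegree : ℤ)) G.maxDegree, K < j → G.allianceCoeff j = 0 := by
    intro j hj hKj
    have hlt : G.alliancePoly.natDegree < (Fintype.card V + j).toNat := by omega
    exact_mod_cast (G.coeff_alliancePoly hΔ hj).symm.trans (coeff_eq_zero_of_natDegree_lt hlt)
  have hone : K ∈ Icc (-(G.maxDegree : ℤ)) G.maxDegree → G.allianceCoeff K = 1 := by
    intro hK
    have hnat : (Fintype.card V + K).toNat = G.alliancePoly.natDegree := by omega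
    rw [← Nat.cast_inj (R := ℝ), ← G.coeff_alliancePoly hΔ hK, hnat, hmon.coeff_natDegree,
      Nat.cast_one]
  have hK : -(G.maxDegree : ℤ) < K := by
    by_contra! h
    have hmem : -(G.maxDegree : ℤ) ∈ Icc (-(G.maxDegree : ℤ)) G.maxDegree := by simp
    obtain h | rfl := h.lt_or_eq
    · exact absurd (hzero _ hmem h) (by omega)
    · exact absurd (hone hmem) (by omega)
  exact ⟨hone (mem_Icc.2 ⟨hK.le, hKΔ⟩), fun j hKj hjΔ => hzero j (mem_Icc.2 ⟨by omega, hjΔ⟩) hKj⟩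

section Removal

variable {G} {B : Finset V} {d : ℕ}

lemma not_isMonicAllianceDegree_of_sdiff (hB : ∀ w ∈ B, G.degree w = d) {X : Finset V}
    (hXB : X ⊆ B) {x u : V} (hx : x ∈ X) (hu : u ∈ B \ X)
    (hX : ∀ w ∈ B \ X, G.degOut B w + #(X.filter (G.Adj w)) ≤ #Bᶜ) :
    ¬ G.IsMonicAllianceDegree (d - 2 * #Bᶜ) := by
  intro hK
  obtain ⟨S₁, -, hxS₁, hS₁, hS₁K⟩ :=
    G.exists_connected_subset_forall_le (K := d - 2 * #Bᶜ) (hXB hx) fun w hw => by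
      have := G.degOut_le_card_compl (S := B) (v := w)
      rw [hB w hw]
      omega
  obtain ⟨S₂, hS₂X, -, hS₂, hS₂K⟩ :=
    G.exists_connected_subset_forall_le (K := d - 2 * #Bᶜ) hu fun w hw => by
      have := hX w hw
      rw [G.degOut_sdiff hXB, hB w (mem_sdiff.1 hw).1]
      omega
  have hxS₂ : x ∈ S₂ := hK.eq_of_forall_le hS₁ hS₁K hS₂ hS₂K ▸ hxS₁
  exact (mem_sdiff.1 (hS₂X hxS₂)).2 hx

lemma not_isMonicAllianceDegree_of_forall_not_adj (hB : ∀ w ∈ B, G.degree w = d)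
    (hB2 : 2 ≤ #B) {x : V} (hx : x ∈ B) (hfull : ∀ w ∈ B, (∀ y ∉ B, G.Adj w y) → ¬ G.Adj w x) :
    ¬ G.IsMonicAllianceDegree (d - 2 * #Bᶜ) := by
  obtain ⟨u, hu, hux⟩ := exists_mem_ne hB2 x
  refine not_isMonicAllianceDegree_of_sdiff hB (singleton_subset_iff.2 hx) (mem_singleton_self x)
    (mem_sdiff.2 ⟨hu, by simpa using hux⟩) fun w hw => ?_
  by_cases hw' : ∀ y ∉ B, G.Adj w y
  · rw [filter_singleton, if_neg (hfull w (mem_sdiff.1 hw).1 hw'), card_empty, add_zero]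
    exact G.degOut_le_card_compl
  · have := G.degOut_lt_card_compl hw'
    have := card_filter_le {x} (G.Adj w)
    rw [card_singleton] at this
    omega

lemma not_isMonicAllianceDegree_of_forall_not_adj_both (hB : ∀ w ∈ B, G.degree w = d)
    (hB3 : 3 ≤ #B) {a b : V} (ha : a ∈ B) (hb : b ∈ B)
    (hfull : ∀ w ∈ B, (∀ y ∉ B, G.Adj w y) → w = a ∨ w = b)
    (hab : ∀ w ∈ B, ¬ (G.Adj w a ∧ G.Adj w b)) :
    ¬ G.IsMonicAllianceDegree (d - 2 * #Bᶜ) := by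
  have hsub : ({a, b} : Finset V) ⊆ B := insert_subset ha (singleton_subset_iff.2 hb)
  obtain ⟨u, hu⟩ : (B \ {a, b}).Nonempty := by
    rw [← card_pos]
    have := le_card_sdiff {a, b} B
    have := card_le_two (a := a) (b := b)
    omega
  refine not_isMonicAllianceDegree_of_sdiff hB hsub (mem_insert_self a {b}) hu fun w hw => ?_
  obtain ⟨hwB, hwab⟩ := mem_sdiff.1 hw
  have := G.degOut_lt_card_compl fun h => hwab (by simpa using hfull w hwB h)
  have : #(({a, b} : Finset V).filter (G.Adj w)) ≤ 1 := by
    have := hab w hwB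
    rw [filter_insert, filter_singleton]
    split_ifs <;> simp_all
  omega

theorem not_isMonicAllianceDegree_of_degree_le_two (hB : ∀ w ∈ B, G.degree w = d)
    (hB3 : 3 ≤ #B) {v : V} (hv : v ∉ B)
    (hdeg : G.degree v ≤ 1 ∨ (G.degree v = 2 ∧ 2 * d ≤ #B + 2 * #Bᶜ)) :
    ¬ G.IsMonicAllianceDegree (d - 2 * #Bᶜ) := by
  set F := B.filter fun w => ∀ y ∉ B, G.Adj w y
  have hF : #F ≤ G.degree v := card_le_card fun w hw =>
    (mem_neighborFinset G v w).2 ((mem_filter.1 hw).2 v hv).symm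
  rcases le_or_gt #F 1 with hF1 | hF2
  · obtain ⟨x, hx, hFx⟩ : ∃ x ∈ B, ∀ w ∈ F, w = x := by
      obtain hFe | ⟨x, hxF⟩ := F.eq_empty_or_nonempty
      · obtain ⟨x, hx⟩ := card_pos.1 (by omega : 0 < #B)
        exact ⟨x, hx, by simp [hFe]⟩
      · exact ⟨x, (mem_filter.1 hxF).1, fun w hw => card_le_one.1 hF1 w hw x hxF⟩
    refine not_isMonicAllianceDegree_of_forall_not_adj hB (by omega) hx fun w hw hfull hwx => ?_
    exact G.irrefl (hFx w (mem_filter.2 ⟨hw, hfull⟩) ▸ hwx)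
  · obtain ⟨-, hd⟩ : G.degree v = 2 ∧ 2 * d ≤ #B + 2 * #Bᶜ := hdeg.resolve_left (by omega)
    obtain ⟨a, b, -, hFab⟩ := card_eq_two.1 (by omega : #F = 2)
    have haF : a ∈ F := hFab ▸ mem_insert_self a {b}
    have hbF : b ∈ F := hFab ▸ mem_insert_of_mem (mem_singleton_self b)
    have hfull : ∀ w ∈ B, (∀ y ∉ B, G.Adj w y) → w = a ∨ w = b := fun w hw h => by
      have hwF : w ∈ F := mem_filter.2 ⟨hw, h⟩
      simpa [hFab] using hwF
    -- If every vertex of `B` is adjacent to `a` or `b`, then `|N(a) ∩ B| + |N(b) ∩ B|`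
    -- `= 2(d - |Bᶜ|) ≤ |B|` forces these neighbourhoods to be disjoint.
    by_cases hcover : ∀ x ∈ B, G.Adj a x ∨ G.Adj b x
    · refine not_isMonicAllianceDegree_of_forall_not_adj_both hB hB3 (mem_filter.1 haF).1
        (mem_filter.1 hbF).1 hfull fun w hw ⟨hwa, hwb⟩ => ?_
      have := G.card_lt_degIn_add_degIn hcover hw hwa.symm hwb.symm
      have := G.degIn_add_card_compl (mem_filter.1 haF).2
      have := G.degIn_add_card_compl (mem_filter.1 hbF).2
      have := hB a (mem_filter.1 haF).1
      have := hB b (mem_filter.1 hbF).1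
      omega
    · obtain ⟨x, hx, hnot⟩ := not_forall₂.1 hcover
      obtain ⟨hax, hbx⟩ := not_or.1 hnot
      refine not_isMonicAllianceDegree_of_forall_not_adj hB (by omega) hx fun w hw hw' => ?_
      rcases hfull w hw hw' with rfl | rfl <;> assumption

end Removal

end SimpleGraph

theorem alliancePoly_not_monic_of_small_minDegree_general
    {W : Type*} [Fintype W] [DecidableEq W]
    (G₁ : SimpleGraph W) [DecidableRel G₁.Adj] (n : ℕ) (hn : 3 ≤ n)
    (hn₁ : n < Fintype.card W)
    (hmax : (Finset.univ.filter (fun v : W => G₁.degree v = G₁.maxDegree)).card = n) :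
    (G₁.minDegree = 1 →
      ¬(G₁.alliancePoly.Monic ∧
        (G₁.alliancePoly.natDegree : ℤ) =
          2 * (n : ℤ) - (Fintype.card W : ℤ) + (G₁.maxDegree : ℤ))) ∧
    (G₁.minDegree = 2 →
      (2 * Fintype.card W < 2 * G₁.maxDegree + n ∨
        ¬(G₁.alliancePoly.Monic ∧
          (G₁.alliancePoly.natDegree : ℤ) =
            2 * (n : ℤ) - (Fintype.card W : ℤ) + (G₁.maxDegree : ℤ)))) := by
  suffices key : G₁.minDegree ≤ 1 ∨
      (G₁.minDegree = 2 ∧ 2 * G₁.maxDegree + n ≤ 2 * Fintype.card W) →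
      ¬(G₁.alliancePoly.Monic ∧ (G₁.alliancePoly.natDegree : ℤ) =
        2 * (n : ℤ) - (Fintype.card W : ℤ) + (G₁.maxDegree : ℤ)) from
    ⟨fun h => key (.inl h.le), fun h => (lt_or_ge _ _).imp_right fun h' => key (.inr ⟨h, h'⟩)⟩
  rintro hδ ⟨hmon, hdeg⟩
  set B := univ.filter fun v : W => G₁.degree v = G₁.maxDegree
  have hBc : #Bᶜ = Fintype.card W - n := by rw [card_compl, hmax]
  have : Nonempty W := Fintype.card_pos_iff.1 (by omega)
  obtain ⟨y, hy⟩ := card_pos.1 (by omega : 0 < #Bᶜ)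
  obtain ⟨v, hv⟩ := G₁.exists_minimal_degree_vertex
  have hvB : v ∉ B := by
    have := G₁.minDegree_le_degree y
    have := G₁.degree_le_maxDegree y
    simp only [B, mem_compl, mem_filter, mem_univ, true_and] at hy ⊢
    omega
  obtain ⟨w₁, hw₁, w₂, hw₂, hne⟩ := one_lt_card.1 (by omega : 1 < #B)
  refine SimpleGraph.not_isMonicAllianceDegree_of_degree_le_two (B := B) (fun w hw => (mem_filter.1 hw).2)
    (by omega) hvB (by omega) (G₁.isMonicAllianceDegree_of_monic ?_ ?_ (by omega) hmon (by omega))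
  · obtain ⟨u, hu⟩ := G₁.exists_maximal_degree_vertex
    exact hu ▸ G₁.degree_lt_card_verts u
  · exact SimpleGraph.two_le_allianceCoeff hne (mem_filter.1 hw₁).2 (mem_filter.1 hw₂).2

/-- Let `G₁` have order `n₁ > n ≥ 3` with exactly `n` vertices of maximum degree
`Δ₁` and symmetric alliance polynomial. If `δ₁ = 1` then `A(G₁;x)` is not a monic polynomial
of degree `2n - n₁ + Δ₁`; if `δ₁ = 2` then `2n₁ < 2Δ₁ + n` or `A(G₁;x)` is not a monic
polynomial of degree `2n - n₁ + Δ₁`. -/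
theorem alliancePoly_not_monic_of_small_minDegree
    {W : Type*} [Fintype W] [DecidableEq W]
    (G₁ : SimpleGraph W) [DecidableRel G₁.Adj] (n : ℕ) (hn : 3 ≤ n)
    (hn₁ : n < Fintype.card W)
    (hmax : (Finset.univ.filter (fun v : W => G₁.degree v = G₁.maxDegree)).card = n)
    (hsym : (∀ x : ℝ, G₁.alliancePoly.eval (-x) = G₁.alliancePoly.eval x) ∨
      (∀ x : ℝ, G₁.alliancePoly.eval (-x) = -G₁.alliancePoly.eval x)) :
    (G₁.minDegree = 1 →
      ¬(G₁.alliancePoly.Monic ∧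
        (G₁.alliancePoly.natDegree : ℤ) =
          2 * (n : ℤ) - (Fintype.card W : ℤ) + (G₁.maxDegree : ℤ))) ∧
    (G₁.minDegree = 2 →
      (2 * Fintype.card W < 2 * G₁.maxDegree + n ∨
        ¬(G₁.alliancePoly.Monic ∧
          (G₁.alliancePoly.natDegree : ℤ) =
            2 * (n : ℤ) - (Fintype.card W : ℤ) + (G₁.maxDegree : ℤ)))) :=
  alliancePoly_not_monic_of_small_minDegree_general G₁ n hn hn₁ hmax
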